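/- Fix real numbers σ > 0, a > 0, x₀ and T, and define K : ℝ × ℝ → ℝ by K(t,x) = (x − x₀)² + σ²(T − t). Then for every t and every x < x₀, the greatest element of the set { ∂K/∂t(t,x) − u² · ∂K/∂x(t,x) + (σ²/2) · ∂²K/∂x²(t,x) : u ∈ [−a,a] } is 2a²(x₀ − x), it is attained at u = a, and 2a²(x₀ − x) > 0. In particular the supremum is nonzero, so K fails to satisfy the Hamilton–Jacobi–Bellman equation sup_{u ∈ [−a,a]} { ∂K/∂t − u² ∂K/∂x + (σ²/2) ∂²K/∂x² } = 0 at every point (t,x) with x < x₀. -/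

import Mathlib

/-!
At the control value u the Hamiltonian of K(t,x) = (x - x₀)² + σ²(T - t) is
-σ² - u² · 2(x - x₀) + (σ²/2) · 2 = 2u²(x₀ - x): the diffusion term exactly cancels the time
derivative. For x < x₀ this is increasing in u², so its maximum over [-a,a] is 2a²(x₀ - x) > 0,
taken at u = ±a, and the HJB equation sup = 0 fails.
-/

open Set

lemma deriv_const_add_mul_sub (c b T t : ℝ) : deriv (fun s : ℝ => c + b * (T - s)) t = -b := by
  simp

lemma deriv_sq_sub_add_const (x₀ c : ℝ) :
    deriv (fun z : ℝ => (z - x₀) ^ 2 + c) = fun z => 2 * (z - x₀) := by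
  funext z
  simp

lemma deriv_deriv_sq_sub_add_const (x₀ c x : ℝ) :
    deriv (deriv fun z : ℝ => (z - x₀) ^ 2 + c) x = 2 := by
  rw [deriv_sq_sub_add_const]
  simp

lemma isGreatest_mul_sq_Icc {a c : ℝ} (ha : 0 ≤ a) (hc : 0 ≤ c) :
    IsGreatest {r : ℝ | ∃ u ∈ Icc (-a) a, r = c * u ^ 2} (c * a ^ 2) := by
  refine ⟨⟨a, ⟨by linarith, le_rfl⟩, rfl⟩, ?_⟩
  rintro r ⟨u, ⟨hau, hua⟩, rfl⟩
  exact mul_le_mul_of_nonneg_left (sq_le_sq' hau hua) hc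

theorem stmt_4_general (σ a x₀ T : ℝ) (ha : 0 < a)
    (K : ℝ → ℝ → ℝ) (hK : ∀ t x, K t x = (x - x₀) ^ 2 + σ ^ 2 * (T - t)) :
    ∀ t x : ℝ, x < x₀ →
      IsGreatest {r : ℝ | ∃ u ∈ Set.Icc (-a) a,
        r = deriv (fun s => K s x) t - u ^ 2 * deriv (fun z => K t z) x
          + σ ^ 2 / 2 * deriv (deriv (fun z => K t z)) x} (2 * a ^ 2 * (x₀ - x)) ∧
      (deriv (fun s => K s x) t - a ^ 2 * deriv (fun z => K t z) x
          + σ ^ 2 / 2 * deriv (deriv (fun z => K t z)) x = 2 * a ^ 2 * (x₀ - x)) ∧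
      0 < 2 * a ^ 2 * (x₀ - x) ∧
      ¬ IsGreatest {r : ℝ | ∃ u ∈ Set.Icc (-a) a,
        r = deriv (fun s => K s x) t - u ^ 2 * deriv (fun z => K t z) x
          + σ ^ 2 / 2 * deriv (deriv (fun z => K t z)) x} 0 := by
  obtain rfl : K = fun t x => (x - x₀) ^ 2 + σ ^ 2 * (T - t) := funext₂ hK
  intro t x hx
  have hamiltonian : ∀ u : ℝ,
      deriv (fun s => (x - x₀) ^ 2 + σ ^ 2 * (T - s)) t
          - u ^ 2 * deriv (fun z => (z - x₀) ^ 2 + σ ^ 2 * (T - t)) x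
          + σ ^ 2 / 2 * deriv (deriv (fun z => (z - x₀) ^ 2 + σ ^ 2 * (T - t))) x
        = 2 * (x₀ - x) * u ^ 2 := by
    intro u
    rw [deriv_const_add_mul_sub, deriv_deriv_sq_sub_add_const, deriv_sq_sub_add_const]
    beta_reduce
    ring
  have hmax_eq : 2 * (x₀ - x) * a ^ 2 = 2 * a ^ 2 * (x₀ - x) := by ring
  have hmax_pos : 0 < 2 * a ^ 2 * (x₀ - x) := by
    have : 0 < x₀ - x := sub_pos.mpr hx
    positivity
  have hgreatest : IsGreatest {r : ℝ | ∃ u ∈ Icc (-a) a, r = 2 * (x₀ - x) * u ^ 2}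
      (2 * a ^ 2 * (x₀ - x)) :=
    hmax_eq ▸ isGreatest_mul_sq_Icc ha.le (by linarith)
  simp only [hamiltonian]
  exact ⟨hgreatest, hmax_eq, hmax_pos, fun h0 => hmax_pos.ne (hgreatest.unique h0).symm⟩

/-- The candidate value function K of the time-consistent regulator fails the
standard HJB equation: for x < x₀ the supremum of the Hamiltonian over
u ∈ [-a,a] equals 2a²(x₀-x) > 0, attained at u = a, and is not 0. -/
theorem stmt_4 (σ a x₀ T : ℝ) (hσ : 0 < σ) (ha : 0 < a)
    (K : ℝ → ℝ → ℝ) (hK : ∀ t x, K t x = (x - x₀) ^ 2 + σ ^ 2 * (T - t)) :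
    ∀ t x : ℝ, x < x₀ →
      IsGreatest {r : ℝ | ∃ u ∈ Set.Icc (-a) a,
        r = deriv (fun s => K s x) t - u ^ 2 * deriv (fun z => K t z) x
          + σ ^ 2 / 2 * deriv (deriv (fun z => K t z)) x} (2 * a ^ 2 * (x₀ - x)) ∧
      (deriv (fun s => K s x) t - a ^ 2 * deriv (fun z => K t z) x
          + σ ^ 2 / 2 * deriv (deriv (fun z => K t z)) x = 2 * a ^ 2 * (x₀ - x)) ∧
      0 < 2 * a ^ 2 * (x₀ - x) ∧
      ¬ IsGreatest {r : ℝ | ∃ u ∈ Set.Icc (-a) a,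
        r = deriv (fun s => K s x) t - u ^ 2 * deriv (fun z => K t z) x
          + σ ^ 2 / 2 * deriv (deriv (fun z => K t z)) x} 0 :=
  stmt_4_general σ a x₀ T ha K hK
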